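/- Let x̄ ∈ 𝒳*, q ∈ (1/2, 1], and ρ ∈ [1/2, q]. Assume: (a) x ↦ ∇f(x) + ∂g(x) is metrically q-subregular at (x̄, 0); (b) ∇²f is Lipschitz continuous on a neighborhood of x̄. Fix constants c, ᾱ, C₁ > 0, M ≥ 0, ν ∈ [0,1), and ϱ ≥ ρ. Then there exist ε > 0 and C₀ > 0 such that: for every x with ‖x − x̄‖ < ε and 𝒢(x) ≠ 0, every symmetric positive semidefinite matrix B with ‖B‖ ≤ M and ‖B − ∇²f(x)‖ ≤ C₁ · dist(x; 𝒳*), and every x̂ ∈ ℝⁿ whose residual e = x̂ − Prox_g(x̂ − ∇f(x) − H(x̂ − x)) with α = min{ᾱ, c‖𝒢(x)‖^ρ} and H = B + αI satisfies ‖e‖ ≤ ν · min{‖𝒢(x)‖, ‖𝒢(x)‖^{1+ϱ}}, one has ‖𝒢(x̂)‖ ≤ C₀ · ‖𝒢(x)‖^{ρ+q}. -/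

import Mathlib

open scoped RealInnerProductSpace
open Metric Set Filter

noncomputable section

abbrev En (n : ℕ) : Type := EuclideanSpace ℝ (Fin n)

/-- Convex subdifferential of an extended-real-valued function `g` at `x`. -/
def ESubdiff {n : ℕ} (g : En n → EReal) (x : En n) : Set (En n) :=
  {v | ∀ y, g x + ((⟪v, y - x⟫ : ℝ) : EReal) ≤ g y}

/-- `g` is proper: it never takes the value `-∞` and is finite somewhere. -/
def ProperFun {n : ℕ} (g : En n → EReal) : Prop :=
  (∀ x, g x ≠ ⊥) ∧ ∃ x, g x ≠ ⊤

/-- Convexity for extended-real-valued functions. -/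
def EConvexOn {n : ℕ} (g : En n → EReal) : Prop :=
  ∀ x y : En n, ∀ a b : ℝ, 0 ≤ a → 0 ≤ b → a + b = 1 →
    g (a • x + b • y) ≤ (a : EReal) * g x + (b : EReal) * g y

/-- `p` minimizes `y ↦ g y + ‖y - u‖ ^ 2 / 2`. -/
def IsProxPt {n : ℕ} (g : En n → EReal) (u p : En n) : Prop :=
  ∀ y, g p + ((‖p - u‖ ^ 2 / 2 : ℝ) : EReal) ≤ g y + ((‖y - u‖ ^ 2 / 2 : ℝ) : EReal)

/-- `prox` maps each `u` to the unique minimizer of `y ↦ g y + ‖y - u‖ ^ 2 / 2`. -/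
def IsProxMap {n : ℕ} (g : En n → EReal) (prox : En n → En n) : Prop :=
  ∀ u, IsProxPt g u (prox u) ∧ ∀ p, IsProxPt g u p → p = prox u

/-- The solution set `𝒳* = argmin (f + g)`. -/
def ArgminSet {n : ℕ} (f : En n → ℝ) (g : En n → EReal) : Set (En n) :=
  {x | ∀ y, (f x : EReal) + g x ≤ (f y : EReal) + g y}

/-- The prox-gradient mapping `𝒢 x = x - Prox_g (x - ∇f x)`. -/
def Gmap {n : ℕ} (f' prox : En n → En n) (x : En n) : En n :=
  x - prox (x - f' x)

variable {n : ℕ}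

lemma subdiff_finite {g : En n → EReal} (hg : ProperFun g) {x v : En n}
    (h : v ∈ ESubdiff g x) : ∃ a : ℝ, g x = (a : EReal) := by
  obtain ⟨hbot, y₀, hy₀⟩ := hg
  have hx : g x ≠ ⊤ := by
    intro hx
    have := h y₀
    rw [hx] at this
    have : (⊤ : EReal) ≤ g y₀ := by
      rwa [EReal.top_add_of_ne_bot (by simp)] at this
    exact hy₀ (top_le_iff.mp this)
  exact ⟨(g x).toReal, (EReal.coe_toReal hx (hbot x)).symm⟩

lemma subdiff_mono {g : En n → EReal} (hg : ProperFun g) {x₁ x₂ v₁ v₂ : En n}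
    (h₁ : v₁ ∈ ESubdiff g x₁) (h₂ : v₂ ∈ ESubdiff g x₂) :
    (0:ℝ) ≤ ⟪v₁ - v₂, x₁ - x₂⟫ := by
  obtain ⟨a₁, ha₁⟩ := subdiff_finite hg h₁
  obtain ⟨a₂, ha₂⟩ := subdiff_finite hg h₂
  have e₁ := h₁ x₂
  have e₂ := h₂ x₁
  rw [ha₁, ha₂] at e₁ e₂
  rw [← EReal.coe_add, EReal.coe_le_coe_iff] at e₁ e₂
  have h3 : ⟪v₁, x₂ - x₁⟫ + ⟪v₂, x₁ - x₂⟫ ≤ 0 := by linarith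
  have h4 : ⟪v₂, x₁ - x₂⟫ - ⟪v₁, x₁ - x₂⟫ ≤ 0 := by
    have : ⟪v₁, x₂ - x₁⟫ = -⟪v₁, x₁ - x₂⟫ := by
      rw [← inner_neg_right]; congr 1; abel
    linarith
  rw [inner_sub_left]; linarith

lemma le_zero_of_small {X K : ℝ} (h : ∀ t : ℝ, 0 < t → t ≤ 1 → X ≤ t * K) : X ≤ 0 := by
  by_contra hX
  push_neg at hX
  rcases le_or_gt K 0 with hK | hK
  · have := h 1 one_pos le_rfl; nlinarith
  · have ht : 0 < min 1 (X / (2 * K)) := lt_min one_pos (by positivity)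
    have := h _ ht (min_le_left _ _)
    have h2 : min 1 (X / (2 * K)) * K ≤ (X / (2 * K)) * K :=
      mul_le_mul_of_nonneg_right (min_le_right _ _) hK.le
    have h3 : (X / (2 * K)) * K = X / 2 := by field_simp
    nlinarith

lemma convex_grad_ineq {f : En n → ℝ} {f' : En n → En n}
    (hfconv : ConvexOn ℝ Set.univ f) (hgrad : ∀ x, HasGradientAt f (f' x) x)
    (w y : En n) : f w + ⟪f' w, y - w⟫ ≤ f y := by
  set d := y - w with hd
  set φ : ℝ → ℝ := fun t => f (w + t • d) with hφ
  have hc : ∀ t : ℝ, HasDerivAt (fun s : ℝ => w + s • d) d t := by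
    intro t
    simpa using ((hasDerivAt_id t).smul_const d).const_add w
  have hder : HasDerivAt φ ⟪f' w, d⟫ 0 := by
    have h1 : HasFDerivAt f (InnerProductSpace.toDual ℝ (En n) (f' w)) w :=
      (hgrad w).hasFDerivAt
    have h1' : HasFDerivAt f (InnerProductSpace.toDual ℝ (En n) (f' w)) (w + (0:ℝ) • d) := by
      simpa using h1
    have h2 := h1'.comp_hasDerivAt 0 (hc 0)
    simpa [InnerProductSpace.toDual_apply_apply, hφ, Function.comp_def] using h2
  have hslope : ∀ t : ℝ, 0 < t → t ≤ 1 → (φ t - φ 0) / t ≤ φ 1 - φ 0 := by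
    intro t ht ht1
    have hcv := hfconv.2 (mem_univ w) (mem_univ y)
      (show (0:ℝ) ≤ 1 - t by linarith) ht.le (show (1 - t) + t = 1 by ring)
    have hpt : (1 - t) • w + t • y = w + t • d := by rw [hd]; module
    rw [hpt] at hcv
    have h2 : f (w + t • d) ≤ (1 - t) * f w + t * f y := by
      simpa [smul_eq_mul] using hcv
    rw [div_le_iff₀ ht]
    have hy : w + (1 : ℝ) • d = y := by rw [hd]; module
    have hw : w + (0 : ℝ) • d = w := by module
    show f (w + t • d) - f (w + (0:ℝ) • d) ≤ (f (w + (1:ℝ) • d) - f (w + (0:ℝ) • d)) * t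
    rw [hy, hw]
    nlinarith
  have htend : Tendsto (fun t => (φ t - φ 0) / t) (nhdsWithin 0 (Set.Ioi 0)) (nhds ⟪f' w, d⟫) := by
    have := hasDerivAt_iff_tendsto_slope.mp hder
    have hmono : nhdsWithin (0:ℝ) (Set.Ioi 0) ≤ nhdsWithin 0 {0}ᶜ :=
      nhdsWithin_mono 0 (fun t ht => ne_of_gt ht)
    have := this.mono_left hmono
    refine this.congr (fun t => ?_)
    simp [slope_def_field]
  have hle : ⟪f' w, d⟫ ≤ φ 1 - φ 0 := by
    refine le_of_tendsto htend ?_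
    filter_upwards [Ioc_mem_nhdsGT one_pos] with t ht
    exact hslope t ht.1 ht.2
  have hφ1 : φ 1 = f y := by simp [hφ, hd]
  have hφ0 : φ 0 = f w := by simp [hφ]
  rw [hφ1, hφ0] at hle
  linarith

lemma inner_flip_neg (v w : En n) : ⟪v, w⟫ = -⟪-v, w⟫ := by
  rw [inner_neg_left]; ring

lemma proxpt_of_subdiff {g : En n → EReal} {u p : En n}
    (h : (u - p) ∈ ESubdiff g p) : IsProxPt g u p := by
  intro y
  have h1 := h y
  have key : ‖p - u‖^2/2 ≤ ⟪u - p, y - p⟫ + ‖y - u‖^2/2 := by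
    have hyu : y - u = (p - u) + (y - p) := by abel
    have hexp : ‖y - u‖^2 = ‖p - u‖^2 + 2*⟪p - u, y - p⟫ + ‖y - p‖^2 := by
      rw [hyu, norm_add_sq_real]
    have hneg : ⟪u - p, y - p⟫ = -⟪p - u, y - p⟫ := by
      rw [← inner_neg_left]; congr 1; abel
    nlinarith [sq_nonneg ‖y - p‖]
  calc g p + ((‖p - u‖^2/2 : ℝ) : EReal)
      ≤ g p + ((⟪u - p, y - p⟫ + ‖y - u‖^2/2 : ℝ) : EReal) :=
        add_le_add_right (EReal.coe_le_coe_iff.mpr key) _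
    _ = (g p + ((⟪u - p, y - p⟫:ℝ) : EReal)) + ((‖y - u‖^2/2 : ℝ):EReal) := by
        rw [EReal.coe_add, add_assoc]
    _ ≤ g y + ((‖y - u‖^2/2 : ℝ):EReal) := add_le_add_left h1 _

lemma finite_of_proxpt {g : En n → EReal} (hg : ProperFun g) {u p : En n}
    (h : IsProxPt g u p) : ∃ a : ℝ, g p = (a : EReal) := by
  obtain ⟨hbot, y₀, hy₀⟩ := hg
  obtain ⟨b, hb⟩ : ∃ b : ℝ, g y₀ = (b : EReal) :=
    ⟨(g y₀).toReal, (EReal.coe_toReal hy₀ (hbot y₀)).symm⟩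
  have hpt : g p ≠ ⊤ := by
    intro htop
    have h2 := h y₀
    rw [htop, hb, EReal.top_add_of_ne_bot (by simp)] at h2
    have hne : ((b:EReal) + ((‖y₀ - u‖^2/2 : ℝ):EReal)) ≠ ⊤ := by
      rw [← EReal.coe_add]; exact EReal.coe_ne_top _
    exact hne (top_le_iff.mp h2)
  exact ⟨(g p).toReal, (EReal.coe_toReal hpt (hbot p)).symm⟩

lemma subdiff_of_proxpt {g : En n → EReal} (hg : ProperFun g) (hgc : EConvexOn g)
    {u p : En n} (h : IsProxPt g u p) : (u - p) ∈ ESubdiff g p := by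
  obtain ⟨a, ha⟩ := finite_of_proxpt hg h
  intro y
  rcases eq_or_ne (g y) ⊤ with hy | hy
  · rw [hy]; exact le_top
  obtain ⟨b, hb⟩ : ∃ b : ℝ, g y = (b : EReal) :=
    ⟨(g y).toReal, (EReal.coe_toReal hy (hg.1 y)).symm⟩
  have key : ∀ t : ℝ, 0 < t → t ≤ 1 →
      a - b - ⟪p - u, y - p⟫ ≤ t * (‖y - p‖^2/2) := by
    intro t ht ht1
    set yt := p + t • (y - p) with hyt
    have hcvx := hgc p y (1-t) t (by linarith) ht.le (by ring)
    have hpt : (1-t) • p + t • y = yt := by rw [hyt]; module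
    rw [hpt, ha, hb] at hcvx
    have hcvx2 : g yt ≤ (((1-t)*a + t*b : ℝ) : EReal) := by
      calc g yt ≤ ((1-t : ℝ):EReal) * (a:EReal) + ((t:ℝ):EReal) * (b:EReal) := hcvx
        _ = (((1-t)*a + t*b : ℝ) : EReal) := by
            rw [← EReal.coe_mul, ← EReal.coe_mul, ← EReal.coe_add]
    have hprox := h yt
    rw [ha] at hprox
    have hchain : ((a + ‖p - u‖^2/2 : ℝ) : EReal) ≤
        (((1-t)*a + t*b + ‖yt - u‖^2/2 : ℝ) : EReal) := by
      calc ((a + ‖p - u‖^2/2 : ℝ) : EReal)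
          = (a:EReal) + ((‖p - u‖^2/2:ℝ):EReal) := by rw [EReal.coe_add]
        _ ≤ g yt + ((‖yt - u‖^2/2:ℝ):EReal) := hprox
        _ ≤ (((1-t)*a + t*b:ℝ):EReal) + ((‖yt - u‖^2/2:ℝ):EReal) :=
            add_le_add_left hcvx2 _
        _ = (((1-t)*a + t*b + ‖yt - u‖^2/2 : ℝ) : EReal) := by norm_cast
    rw [EReal.coe_le_coe_iff] at hchain
    have hytu : yt - u = (p - u) + t • (y - p) := by rw [hyt]; abel
    have hexp : ‖yt - u‖^2 = ‖p - u‖^2 + 2*(t*⟪p - u, y - p⟫) + t^2*‖y - p‖^2 := by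
      rw [hytu, norm_add_sq_real, real_inner_smul_right, norm_smul]
      simp [abs_of_pos ht]
      ring
    rw [hexp] at hchain
    have h5 : t * (a - b - ⟪p - u, y - p⟫) ≤ t * (t * (‖y - p‖^2/2)) := by nlinarith
    exact le_of_mul_le_mul_left (by linarith [h5]) ht |>.trans le_rfl
  have hX := le_zero_of_small (K := ‖y - p‖^2/2) key
  rw [ha, hb, ← EReal.coe_add, EReal.coe_le_coe_iff]
  have : ⟪u - p, y - p⟫ = -⟪p - u, y - p⟫ := by
    rw [← inner_neg_left]; congr 1; abel
  linarith [hX, this.ge, this.le]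

lemma argmin_subdiff {f : En n → ℝ} {f' : En n → En n} {L₁ : ℝ}
    (hfconv : ConvexOn ℝ Set.univ f) (hgrad : ∀ x, HasGradientAt f (f' x) x)
    (hlip : ∀ x y : En n, ‖f' x - f' y‖ ≤ L₁ * ‖x - y‖)
    {g : En n → EReal} (hg : ProperFun g) (hgc : EConvexOn g)
    {w : En n} (hw : w ∈ ArgminSet f g) : (-(f' w)) ∈ ESubdiff g w := by
  obtain ⟨hbot, y₀, hy₀⟩ := hg
  obtain ⟨b₀, hb₀⟩ : ∃ b : ℝ, g y₀ = (b : EReal) :=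
    ⟨(g y₀).toReal, (EReal.coe_toReal hy₀ (hbot y₀)).symm⟩
  have hwt : g w ≠ ⊤ := by
    intro htop
    have h2 := hw y₀
    rw [htop, hb₀, EReal.add_top_of_ne_bot (by simp)] at h2
    have hne : ((f y₀ : ℝ):EReal) + (b₀:EReal) ≠ ⊤ := by
      rw [← EReal.coe_add]; exact EReal.coe_ne_top _
    exact hne (top_le_iff.mp h2)
  obtain ⟨a, ha⟩ : ∃ a : ℝ, g w = (a : EReal) :=
    ⟨(g w).toReal, (EReal.coe_toReal hwt (hbot w)).symm⟩
  intro y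
  rcases eq_or_ne (g y) ⊤ with hy | hy
  · rw [hy]; exact le_top
  obtain ⟨b, hb⟩ : ∃ b : ℝ, g y = (b : EReal) :=
    ⟨(g y).toReal, (EReal.coe_toReal hy (hbot y)).symm⟩
  have key : ∀ t : ℝ, 0 < t → t ≤ 1 →
      a - b - ⟪f' w, y - w⟫ ≤ t * (L₁ * ‖y - w‖^2) := by
    intro t ht ht1
    set yt := w + t • (y - w) with hyt
    have hcvx := hgc w y (1-t) t (by linarith) ht.le (by ring)
    have hpt : (1-t) • w + t • y = yt := by rw [hyt]; module
    rw [hpt, ha, hb] at hcvx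
    have hcvx2 : g yt ≤ (((1-t)*a + t*b : ℝ) : EReal) := by
      refine hcvx.trans_eq ?_; norm_cast
    have hmin := hw yt
    rw [ha] at hmin
    have hchain : ((f w + a : ℝ) : EReal) ≤ ((f yt + ((1-t)*a + t*b) : ℝ) : EReal) := by
      calc ((f w + a : ℝ) : EReal) = ((f w :ℝ):EReal) + (a:EReal) := by norm_cast
        _ ≤ ((f yt:ℝ):EReal) + g yt := hmin
        _ ≤ ((f yt:ℝ):EReal) + (((1-t)*a + t*b:ℝ):EReal) := add_le_add_right hcvx2 _
        _ = ((f yt + ((1-t)*a + t*b) : ℝ) : EReal) := by norm_cast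
    rw [EReal.coe_le_coe_iff] at hchain
    have hgi := convex_grad_ineq hfconv hgrad yt w
    have hytw : w - yt = (-t) • (y - w) := by rw [hyt]; module
    have h6 : ⟪f' yt, w - yt⟫ = -t * ⟪f' yt, y - w⟫ := by
      rw [hytw, real_inner_smul_right]
    have h7 : f yt - f w ≤ t * ⟪f' yt, y - w⟫ := by
      rw [h6] at hgi; linarith
    have h8 : ⟪f' yt - f' w, y - w⟫ ≤ L₁ * t * ‖y - w‖^2 := by
      calc ⟪f' yt - f' w, y - w⟫ ≤ ‖f' yt - f' w‖ * ‖y - w‖ :=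
            real_inner_le_norm _ _
        _ ≤ (L₁ * ‖yt - w‖) * ‖y - w‖ :=
            mul_le_mul_of_nonneg_right (hlip yt w) (norm_nonneg _)
        _ = L₁ * t * ‖y - w‖^2 := by
            have h4 : yt - w = t • (y - w) := by rw [hyt]; abel
            rw [h4, norm_smul]
            simp only [Real.norm_eq_abs, abs_of_pos ht]
            ring
    have h9 : ⟪f' yt, y - w⟫ = ⟪f' w, y - w⟫ + ⟪f' yt - f' w, y - w⟫ := by
      rw [inner_sub_left]; ring
    have h9t : t * ⟪f' yt, y - w⟫ = t * ⟪f' w, y - w⟫ + t * ⟪f' yt - f' w, y - w⟫ := by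
      rw [h9]; ring
    have h8t : t * ⟪f' yt - f' w, y - w⟫ ≤ t * (L₁ * t * ‖y - w‖^2) :=
      mul_le_mul_of_nonneg_left h8 ht.le
    have h11 : t * (a - b - ⟪f' w, y - w⟫) ≤ t * (t * (L₁ * ‖y - w‖^2)) := by nlinarith
    exact le_of_mul_le_mul_left h11 ht
  have hX := le_zero_of_small (K := L₁ * ‖y - w‖^2) key
  rw [ha, hb, ← EReal.coe_add, EReal.coe_le_coe_iff, inner_neg_left]
  linarith

lemma prox_nonexpansive {g : En n → EReal} (hg : ProperFun g) (hgc : EConvexOn g)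
    {prox : En n → En n} (hprox : IsProxMap g prox) (u v : En n) :
    ‖prox u - prox v‖ ≤ ‖u - v‖ := by
  have h₁ := subdiff_of_proxpt hg hgc (hprox u).1
  have h₂ := subdiff_of_proxpt hg hgc (hprox v).1
  have hm := subdiff_mono hg h₁ h₂
  set p := prox u
  set q := prox v
  have hexp : ⟪(u - p) - (v - q), p - q⟫ = ⟪u - v, p - q⟫ - ‖p - q‖^2 := by
    have h5 : (u - p) - (v - q) = (u - v) - (p - q) := by abel
    rw [h5, inner_sub_left, real_inner_self_eq_norm_sq]
  have hcs : ⟪u - v, p - q⟫ ≤ ‖u - v‖ * ‖p - q‖ := real_inner_le_norm _ _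
  have h2 : ‖p - q‖^2 ≤ ‖u - v‖ * ‖p - q‖ := by rw [hexp] at hm; linarith
  rcases eq_or_lt_of_le (norm_nonneg (p - q)) with h0 | h0
  · rw [← h0]; exact norm_nonneg _
  · nlinarith

lemma argmin_gmap_zero {f : En n → ℝ} {f' : En n → En n} {L₁ : ℝ}
    (hfconv : ConvexOn ℝ Set.univ f) (hgrad : ∀ x, HasGradientAt f (f' x) x)
    (hlip : ∀ x y : En n, ‖f' x - f' y‖ ≤ L₁ * ‖x - y‖)
    {g : En n → EReal} (hg : ProperFun g) (hgc : EConvexOn g)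
    {prox : En n → En n} (hprox : IsProxMap g prox)
    {w : En n} (hw : w ∈ ArgminSet f g) : Gmap f' prox w = 0 := by
  have hsub := argmin_subdiff hfconv hgrad hlip hg hgc hw
  have h3 : ((w - f' w) - w) ∈ ESubdiff g w := by
    have h4 : (w - f' w) - w = -(f' w) := by abel
    rw [h4]; exact hsub
  have hpt := proxpt_of_subdiff h3
  have h5 := (hprox (w - f' w)).2 w hpt
  rw [Gmap, ← h5, sub_self]

lemma le_infDist' {s : Set (En n)} (hs : s.Nonempty) {x : En n} {b : ℝ}
    (h : ∀ y ∈ s, b ≤ dist x y) : b ≤ Metric.infDist x s := by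
  rw [Metric.infDist_eq_iInf]
  haveI : Nonempty s := hs.to_subtype
  exact le_ciInf fun y => h y y.2

lemma taylor_grad_bound {f' : En n → En n} {f'' : En n → En n →L[ℝ] En n}
    (hhess : ∀ z, HasFDerivAt f' (f'' z) z) {xbar : En n} {δ L₀ : ℝ} (hL₀ : 0 ≤ L₀)
    (hlip2 : ∀ z ∈ Metric.ball xbar δ, ∀ y ∈ Metric.ball xbar δ, ‖f'' z - f'' y‖ ≤ L₀ * ‖z - y‖)
    {x y : En n} (hx : x ∈ Metric.ball xbar δ) (hy : y ∈ Metric.ball xbar δ) :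
    ‖f' y - f' x - (f'' x) (y - x)‖ ≤ (L₀ * ‖y - x‖) * ‖y - x‖ := by
  have hseg : segment ℝ x y ⊆ Metric.ball xbar δ := (convex_ball xbar δ).segment_subset hx hy
  refine (convex_segment x y).norm_image_sub_le_of_norm_hasFDerivWithin_le'
    (fun z _ => (hhess z).hasFDerivWithinAt) (fun z hz => ?_)
    (left_mem_segment ℝ x y) (right_mem_segment ℝ x y)
  have h1 : ‖f'' z - f'' x‖ ≤ L₀ * ‖z - x‖ := hlip2 z (hseg hz) x hx
  have h2 : ‖z - x‖ ≤ ‖y - x‖ := by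
    obtain ⟨a, b, ha, hb, hab, rfl⟩ := hz
    have hzx : a • x + b • y - x = b • (y - x) := by
      have hx1 : a = 1 - b := by linarith
      rw [hx1]; module
    rw [hzx, norm_smul, Real.norm_eq_abs, abs_of_nonneg hb]
    nlinarith [norm_nonneg (y - x)]
  calc ‖f'' z - f'' x‖ ≤ L₀ * ‖z - x‖ := h1
    _ ≤ L₀ * ‖y - x‖ := by gcongr


set_option maxHeartbeats 2000000 in
/-- Under metric `q`-subregularity with `q ∈ (1/2, 1]`, `ρ ∈ [1/2, q]`,
and local Lipschitz continuity of the Hessian, an inexact proximal Newton step satisfies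
`‖𝒢(xhat)‖ ≤ C₀ ‖𝒢(x)‖^{ρ+q}` near `x̄`. -/
theorem superlinear_Gmap_estimate {n : ℕ}
    (f : En n → ℝ) (f' : En n → En n) (f'' : En n → En n →L[ℝ] En n)
    (g : En n → EReal) (prox : En n → En n)
    (L₁ : ℝ) (hL₁ : 0 < L₁)
    (hfconv : ConvexOn ℝ Set.univ f)
    (hgrad : ∀ x, HasGradientAt f (f' x) x)
    (hhess : ∀ x, HasFDerivAt f' (f'' x) x)
    (hhesscont : Continuous f'')
    (hlip : ∀ x y : En n, ‖f' x - f' y‖ ≤ L₁ * ‖x - y‖)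
    (hgproper : ProperFun g) (hglsc : LowerSemicontinuous g) (hgconv : EConvexOn g)
    (hprox : IsProxMap g prox)
    (hXne : (ArgminSet f g).Nonempty)
    (xbar : En n) (hxbar : xbar ∈ ArgminSet f g)
    (q : ℝ) (hq0 : 1 / 2 < q) (hq1 : q ≤ 1)
    (ρ : ℝ) (hρ0 : 1 / 2 ≤ ρ) (hρq : ρ ≤ q)
    (hsubreg : ∃ κ > (0 : ℝ), ∃ ε > (0 : ℝ), ∀ x : En n, ‖x - xbar‖ < ε →
      ∀ v ∈ ESubdiff g x, Metric.infDist x (ArgminSet f g) ≤ κ * ‖f' x + v‖ ^ q)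
    (hhesslip : ∃ δ > (0 : ℝ), ∃ L₂ : ℝ, ∀ x ∈ Metric.ball xbar δ, ∀ y ∈ Metric.ball xbar δ,
      ‖f'' x - f'' y‖ ≤ L₂ * ‖x - y‖)
    (c ᾱ C₁ : ℝ) (hc : 0 < c) (hᾱ : 0 < ᾱ) (hC₁ : 0 < C₁)
    (M : ℝ) (hM : 0 ≤ M)
    (ν : ℝ) (hν0 : 0 ≤ ν) (hν1 : ν < 1)
    (ϱ : ℝ) (hϱ : ρ ≤ ϱ) :
    ∃ ε > (0 : ℝ), ∃ C₀ > (0 : ℝ), ∀ x : En n, ‖x - xbar‖ < ε → Gmap f' prox x ≠ 0 →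
      ∀ B : En n →L[ℝ] En n,
        (∀ u v : En n, ⟪B u, v⟫ = ⟪u, B v⟫) → (∀ u : En n, 0 ≤ ⟪B u, u⟫) →
        ‖B‖ ≤ M → ‖B - f'' x‖ ≤ C₁ * Metric.infDist x (ArgminSet f g) →
      ∀ xhat : En n,
        ‖xhat - prox (xhat - f' x - (B (xhat - x) +
            (min ᾱ (c * ‖Gmap f' prox x‖ ^ ρ)) • (xhat - x)))‖ ≤
          ν * min ‖Gmap f' prox x‖ (‖Gmap f' prox x‖ ^ (1 + ϱ)) →
        ‖Gmap f' prox xhat‖ ≤ C₀ * ‖Gmap f' prox x‖ ^ (ρ + q) := by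
  obtain ⟨κ, hκ, ε₁, hε₁, hsub⟩ := hsubreg
  obtain ⟨δ, hδ, L₂, hlip2⟩ := hhesslip
  set L₀ : ℝ := max L₂ 0 with hL₀def
  have hL₀ : 0 ≤ L₀ := le_max_right _ _
  have hlip2' : ∀ z ∈ Metric.ball xbar δ, ∀ y ∈ Metric.ball xbar δ,
      ‖f'' z - f'' y‖ ≤ L₀ * ‖z - y‖ := fun z hz y hy =>
    (hlip2 z hz y hy).trans (mul_le_mul_of_nonneg_right (le_max_left _ _) (norm_nonneg _))
  set K₁ : ℝ := 2 + L₁ with hK₁def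
  have hK₁ : 0 < K₁ := by rw [hK₁def]; linarith only [hL₁]
  set K₂ : ℝ := 1 + κ * (1 + L₁) ^ (q : ℝ) with hK₂def
  have hK₂ : 0 < K₂ := by
    have h1 : (0:ℝ) < (1 + L₁) ^ (q : ℝ) := Real.rpow_pos_of_pos (by linarith only [hL₁]) q
    rw [hK₂def]; linarith only [mul_pos hκ h1]
  set K₃ : ℝ := (1 + M + ᾱ) * (1/ᾱ + 1/c) + (4*L₀*K₂^2 + 2*C₁*K₂^2) * (1/ᾱ + 1/c) + 4*K₂
    with hK₃def
  have hinv : 0 < 1/ᾱ + 1/c := add_pos (one_div_pos.mpr hᾱ) (one_div_pos.mpr hc)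
  have hK₃ : 0 < K₃ := by
    have p1 : 0 < (1 + M + ᾱ) * (1/ᾱ + 1/c) := mul_pos (by linarith only [hM, hᾱ]) hinv
    have p2 : 0 ≤ (4*L₀*K₂^2 + 2*C₁*K₂^2) * (1/ᾱ + 1/c) := by
      apply mul_nonneg _ hinv.le
      linarith only [mul_nonneg hL₀ (sq_nonneg K₂), mul_nonneg hC₁.le (sq_nonneg K₂)]
    rw [hK₃def]
    have p3 : (0:ℝ) < 4*K₂ := by linarith only [hK₂]
    exact add_pos (add_pos_of_pos_of_nonneg p1 p2) p3
  set K₄ : ℝ := K₃ + 1 + 2*K₂ with hK₄def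
  have hK₄ : 0 < K₄ := by rw [hK₄def]; linarith only [hK₃, hK₂]
  set η : ℝ := min 1 (δ/(2*K₄+2)) with hηdef
  have hη : 0 < η := lt_min one_pos (div_pos hδ (by linarith only [hK₄]))
  have hη1 : η ≤ 1 := min_le_left _ _
  have hq0' : (0:ℝ) < q := by linarith only [hq0]
  set ε : ℝ := min (min (ε₁/(4+L₁)) (δ/3)) (η^((1:ℝ)/q)/K₁) with hεdef
  have hηq : 0 < η^((1:ℝ)/q) := Real.rpow_pos_of_pos hη _
  have hε : 0 < ε := by
    refine lt_min (lt_min (div_pos hε₁ (by linarith only [hL₁])) (div_pos hδ (by norm_num))) ?_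
    exact div_pos hηq hK₁
  have hC₀pos : 0 < 1 + L₀*K₄^2 + C₁*K₂*K₄ + c*K₄ := by
    have p1 : 0 ≤ L₀*K₄^2 := mul_nonneg hL₀ (sq_nonneg _)
    have p2 : 0 < C₁*K₂*K₄ := mul_pos (mul_pos hC₁ hK₂) hK₄
    have p3 : 0 < c*K₄ := mul_pos hc hK₄
    linarith only [p1, p2, p3]
  refine ⟨ε, hε, 1 + L₀*K₄^2 + C₁*K₂*K₄ + c*K₄, hC₀pos, ?_⟩
  intro x hxε hGx B hBsym hBpsd hBM hBC xhat hres
  set d := Metric.infDist x (ArgminSet f g) with hddef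
  set r := ‖Gmap f' prox x‖ with hrdef
  have hr0 : 0 < r := by rw [hrdef]; exact norm_pos_iff.mpr hGx
  have hGlip : ∀ w ∈ ArgminSet f g, r ≤ K₁ * ‖x - w‖ := by
    intro w hw
    have hGw : Gmap f' prox w = 0 :=
      argmin_gmap_zero hfconv hgrad hlip hgproper hgconv hprox hw
    have h1 : Gmap f' prox x =
        (x - w) - (prox (x - f' x) - prox (w - f' w)) + Gmap f' prox w := by
      simp only [Gmap]; abel
    have h2 : r ≤ ‖x - w‖ + ‖prox (x - f' x) - prox (w - f' w)‖ := by
      rw [hrdef, h1, hGw, add_zero]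
      exact norm_sub_le _ _
    have h3 : ‖prox (x - f' x) - prox (w - f' w)‖ ≤ ‖(x - f' x) - (w - f' w)‖ :=
      prox_nonexpansive hgproper hgconv hprox _ _
    have h4 : ‖(x - f' x) - (w - f' w)‖ ≤ ‖x - w‖ + ‖f' x - f' w‖ := by
      have h5 : (x - f' x) - (w - f' w) = (x - w) - (f' x - f' w) := by abel
      rw [h5]; exact norm_sub_le _ _
    have h6 := hlip x w
    rw [hK₁def]
    linarith only [h2, h3, h4, h6]
  have hrd : r / K₁ ≤ d := by
    refine le_infDist' hXne (fun y hy => ?_)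
    rw [dist_eq_norm, div_le_iff₀ hK₁]
    have h := hGlip y hy
    linarith only [h]
  have hd0 : 0 < d := lt_of_lt_of_le (div_pos hr0 hK₁) hrd
  have hdx : d ≤ ‖x - xbar‖ := by
    have h := Metric.infDist_le_dist_of_mem (x := x) hxbar
    rwa [dist_eq_norm] at h
  have hrx : r < K₁ * ε :=
    lt_of_le_of_lt (hGlip xbar hxbar) (mul_lt_mul_of_pos_left hxε hK₁)
  have hεη : ε ≤ η^((1:ℝ)/q)/K₁ := min_le_right _ _
  have hK₁ε : K₁ * ε ≤ η^((1:ℝ)/q) := by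
    calc K₁ * ε ≤ K₁ * (η^((1:ℝ)/q)/K₁) := mul_le_mul_of_nonneg_left hεη hK₁.le
      _ = η^((1:ℝ)/q) := by field_simp
  have hrη : r ≤ η^((1:ℝ)/q) := le_of_lt (hrx.trans_le hK₁ε)
  have hηle1 : η^((1:ℝ)/q) ≤ 1 :=
    Real.rpow_le_one hη.le hη1 (le_of_lt (one_div_pos.mpr hq0'))
  have hr1 : r ≤ 1 := hrη.trans hηle1
  have hrqη : r ^ q ≤ η := by
    have h := Real.rpow_le_rpow hr0.le hrη hq0'.le
    rwa [← Real.rpow_mul hη.le, one_div, inv_mul_cancel₀ (ne_of_gt hq0'), Real.rpow_one] at h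
  have pow_le : ∀ a b : ℝ, b ≤ a → r ^ a ≤ r ^ b := fun a b h =>
    Real.rpow_le_rpow_of_exponent_ge hr0 hr1 h
  have hrrq : r ≤ r ^ q := by
    have h := pow_le 1 q hq1
    rwa [Real.rpow_one] at h
  have hrq0 : 0 < r ^ q := Real.rpow_pos_of_pos hr0 q
  have hrρ0 : 0 < r ^ ρ := Real.rpow_pos_of_pos hr0 ρ
  have hzp : ((x - f' x) - prox (x - f' x)) ∈ ESubdiff g (prox (x - f' x)) :=
    subdiff_of_proxpt hgproper hgconv (hprox _).1
  have hzpx : ‖x - prox (x - f' x)‖ = r := by rw [hrdef]; rfl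
  have hεa : ε ≤ ε₁/(4+L₁) := (min_le_left _ _).trans (min_le_left _ _)
  have hzpnear : ‖prox (x - f' x) - xbar‖ < ε₁ := by
    have h1 : ‖prox (x - f' x) - xbar‖ ≤ ‖prox (x - f' x) - x‖ + ‖x - xbar‖ := by
      calc ‖prox (x - f' x) - xbar‖ = ‖(prox (x - f' x) - x) + (x - xbar)‖ := by
            congr 1; abel
        _ ≤ _ := norm_add_le _ _
    have h2 : ‖prox (x - f' x) - x‖ = r := by rw [norm_sub_rev]; exact hzpx
    have h3 : (3+L₁)*(ε₁/(4+L₁)) < ε₁ := by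
      rw [mul_div_assoc']
      rw [div_lt_iff₀ (by linarith only [hL₁] : (0:ℝ) < 4+L₁)]
      linarith only [hε₁]
    have h4 : r + ‖x - xbar‖ < K₁*ε + ε := by linarith only [hrx, hxε]
    have h5 : K₁*ε + ε = (3+L₁)*ε := by rw [hK₁def]; ring
    have h6 : (3+L₁)*ε ≤ (3+L₁)*(ε₁/(4+L₁)) :=
      mul_le_mul_of_nonneg_left hεa (by linarith only [hL₁])
    linarith only [h1, h2, h3, h4, h5, h6]
  have happ := hsub _ hzpnear _ hzp
  have hfv : ‖f' (prox (x - f' x)) + ((x - f' x) - prox (x - f' x))‖ ≤ (1+L₁)*r := by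
    have h1 : f' (prox (x - f' x)) + ((x - f' x) - prox (x - f' x)) =
        (f' (prox (x - f' x)) - f' x) + (x - prox (x - f' x)) := by abel
    rw [h1]
    have h2 := norm_add_le (f' (prox (x - f' x)) - f' x) (x - prox (x - f' x))
    have h3 := hlip (prox (x - f' x)) x
    have h4 : ‖prox (x - f' x) - x‖ = r := by rw [norm_sub_rev]; exact hzpx
    rw [hzpx] at h2
    rw [h4] at h3
    linarith only [h2, h3]
  have hdz : d ≤ K₂ * r^q := by
    have h1 : d ≤ Metric.infDist (prox (x - f' x)) (ArgminSet f g) + r := by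
      have h := Metric.infDist_le_infDist_add_dist
        (x := x) (y := prox (x - f' x)) (s := ArgminSet f g)
      rw [dist_eq_norm, hzpx] at h
      exact h
    have h2 : Metric.infDist (prox (x - f' x)) (ArgminSet f g) ≤ κ * ((1+L₁)*r)^q := by
      refine happ.trans ?_
      exact mul_le_mul_of_nonneg_left
        (Real.rpow_le_rpow (norm_nonneg _) hfv hq0'.le) hκ.le
    have h3 : ((1+L₁)*r)^q = (1+L₁)^q * r^q :=
      Real.mul_rpow (by linarith only [hL₁]) hr0.le
    rw [h3] at h2
    have h4 : κ * ((1+L₁)^q * r^q) = κ * (1+L₁)^q * r^q := by ring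
    rw [h4] at h2
    have h5 : K₂ * r^q = r^q + κ * (1+L₁)^q * r^q := by rw [hK₂def]; ring
    linarith only [h1, h2, h5, hrrq]
  obtain ⟨yb, hybS, hybd⟩ := (Metric.infDist_lt_iff hXne).1
    (show Metric.infDist x (ArgminSet f g) < 2*d by rw [← hddef]; linarith only [hd0])
  set w := x - yb with hwdef
  have hwd : ‖w‖ < 2*d := by rw [hwdef, ← dist_eq_norm]; exact hybd
  have hw2 : ‖w‖ ≤ 2*K₂*r^q := by linarith only [hwd, hdz]
  have hεδ3 : ε ≤ δ/3 := (min_le_left _ _).trans (min_le_right _ _)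
  have hxball : x ∈ Metric.ball xbar δ := by
    rw [Metric.mem_ball, dist_eq_norm]; linarith only [hxε, hεδ3, hδ]
  have hybball : yb ∈ Metric.ball xbar δ := by
    rw [Metric.mem_ball, dist_eq_norm]
    have h1 : ‖yb - xbar‖ ≤ ‖yb - x‖ + ‖x - xbar‖ := by
      calc ‖yb - xbar‖ = ‖(yb - x) + (x - xbar)‖ := by congr 1; abel
        _ ≤ _ := norm_add_le _ _
    have h2 : ‖yb - x‖ = ‖w‖ := by rw [hwdef, norm_sub_rev]
    linarith only [h1, h2, hwd, hdx, hxε, hεδ3, hδ]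
  set α := min ᾱ (c * r ^ ρ) with hαdef
  have hα0 : 0 < α := lt_min hᾱ (mul_pos hc hrρ0)
  have hαᾱ : α ≤ ᾱ := min_le_left _ _
  have hαc : α ≤ c * r^ρ := min_le_right _ _
  set P := xhat - f' x - (B (xhat - x) + α • (xhat - x)) with hPdef
  set s := prox P with hsdef
  set e := xhat - s with hedef
  have hmin0 : (0:ℝ) ≤ min r (r^(1+ϱ)) := le_min hr0.le (Real.rpow_pos_of_pos hr0 _).le
  have he1 : ‖e‖ ≤ r ^ (1+ϱ) := by
    refine hres.trans ?_
    have h := mul_le_mul hν1.le (min_le_right r (r^(1+ϱ))) hmin0 zero_le_one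
    rwa [one_mul] at h
  have he0 : ‖e‖ ≤ r := by
    refine hres.trans ?_
    have h := mul_le_mul hν1.le (min_le_left r (r^(1+ϱ))) hmin0 zero_le_one
    rwa [one_mul] at h
  have hvs : (P - s) ∈ ESubdiff g s := subdiff_of_proxpt hgproper hgconv (hprox P).1
  have hvb : (-(f' yb)) ∈ ESubdiff g yb :=
    argmin_subdiff hfconv hgrad hlip hgproper hgconv hybS
  have hm := subdiff_mono hgproper hvs hvb
  set u := s - yb with hudef
  set T₁ := f' yb - f' x - (f'' x) (yb - x) with hT₁def
  have hz : xhat - x = u + e - w := by rw [hudef, hedef, hwdef]; abel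
  have hVid : (P - s) - (-(f' yb)) =
      (e - B e - α • e) + (T₁ + ((B - f'' x) w) + α • w) - (B u + α • u) := by
    have hBz : B (xhat - x) = B u + B e - B w := by rw [hz, map_sub, map_add]
    have hyx : yb - x = -w := by rw [hwdef]; abel
    have hf2 : (f'' x) (yb - x) = -((f'' x) w) := by rw [hyx, map_neg]
    have hsz : α • (xhat - x) = α • u + α • e - α • w := by
      rw [hz, smul_sub, smul_add]
    rw [hPdef, hT₁def, hBz, hsz, hf2]
    simp only [ContinuousLinearMap.sub_apply]
    rw [hedef]
    abel
  have hkey : α * ‖u‖^2 ≤ ((1+M+ᾱ) * ‖e‖ + (L₀*‖w‖^2 + C₁*d*‖w‖ + α*‖w‖)) * ‖u‖ := by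
    rw [hVid] at hm
    have hexp : ⟪(e - B e - α • e) + (T₁ + ((B - f'' x) w) + α • w) - (B u + α • u), u⟫
        = ⟪e - B e - α • e, u⟫ + ⟪T₁ + ((B - f'' x) w) + α • w, u⟫
          - (⟪B u, u⟫ + α * ⟪u, u⟫) := by
      simp only [inner_sub_left, inner_add_left, real_inner_smul_left]
    rw [hexp] at hm
    have hBu := hBpsd u
    have hc1 : ⟪e - B e - α • e, u⟫ ≤ ((1+M+ᾱ) * ‖e‖) * ‖u‖ := by
      refine (real_inner_le_norm _ _).trans ?_
      have hn : ‖e - B e - α • e‖ ≤ (1+M+ᾱ) * ‖e‖ := by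
        have t1 : ‖e - B e - α • e‖ ≤ ‖e - B e‖ + ‖α • e‖ := norm_sub_le _ _
        have t2 : ‖e - B e‖ ≤ ‖e‖ + ‖B e‖ := norm_sub_le _ _
        have t3 : ‖B e‖ ≤ M * ‖e‖ :=
          (B.le_opNorm e).trans (mul_le_mul_of_nonneg_right hBM (norm_nonneg _))
        have t4 : ‖α • e‖ = α * ‖e‖ := by
          rw [norm_smul, Real.norm_eq_abs, abs_of_pos hα0]
        linarith only [t1, t2, t3, t4,
          mul_le_mul_of_nonneg_right hαᾱ (norm_nonneg e)]
      exact mul_le_mul_of_nonneg_right hn (norm_nonneg u)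
    have hc2 : ⟪T₁ + ((B - f'' x) w) + α • w, u⟫
        ≤ (L₀*‖w‖^2 + C₁*d*‖w‖ + α*‖w‖) * ‖u‖ := by
      refine (real_inner_le_norm _ _).trans ?_
      have hn : ‖T₁ + ((B - f'' x) w) + α • w‖ ≤ L₀*‖w‖^2 + C₁*d*‖w‖ + α*‖w‖ := by
        have t1 : ‖T₁ + ((B - f'' x) w) + α • w‖
            ≤ ‖T₁ + (B - f'' x) w‖ + ‖α • w‖ := norm_add_le _ _
        have t2 : ‖T₁ + (B - f'' x) w‖ ≤ ‖T₁‖ + ‖(B - f'' x) w‖ := norm_add_le _ _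
        have t3 : ‖T₁‖ ≤ L₀*‖w‖^2 := by
          have h := taylor_grad_bound hhess hL₀ hlip2' hxball hybball
          have hyw : ‖yb - x‖ = ‖w‖ := by rw [hwdef, norm_sub_rev]
          rw [hT₁def]
          rw [hyw] at h
          linarith only [h]
        have t4 : ‖(B - f'' x) w‖ ≤ C₁*d*‖w‖ :=
          ((B - f'' x).le_opNorm w).trans
            (mul_le_mul_of_nonneg_right hBC (norm_nonneg _))
        have t5 : ‖α • w‖ = α * ‖w‖ := by
          rw [norm_smul, Real.norm_eq_abs, abs_of_pos hα0]
        linarith only [t1, t2, t3, t4, t5]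
      exact mul_le_mul_of_nonneg_right hn (norm_nonneg u)
    have huu : ⟪u, u⟫ = ‖u‖^2 := real_inner_self_eq_norm_sq u
    rw [huu] at hm
    linarith only [hm, hBu, hc1, hc2]
  set A := (1+M+ᾱ) * ‖e‖ + (L₀*‖w‖^2 + C₁*d*‖w‖ + α*‖w‖) with hAdef
  have hA0 : 0 ≤ A := by
    have p1 : 0 ≤ (1+M+ᾱ)*‖e‖ := mul_nonneg (by linarith only [hM, hᾱ]) (norm_nonneg _)
    have p2 : 0 ≤ L₀*‖w‖^2 := mul_nonneg hL₀ (sq_nonneg _)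
    have p3 : 0 ≤ C₁*d*‖w‖ := mul_nonneg (mul_nonneg hC₁.le hd0.le) (norm_nonneg _)
    have p4 : 0 ≤ α*‖w‖ := mul_nonneg hα0.le (norm_nonneg _)
    rw [hAdef]; linarith only [p1, p2, p3, p4]
  have hαu : α * ‖u‖ ≤ A := by
    rcases eq_or_lt_of_le (norm_nonneg u) with h0 | h0
    · rw [← h0, mul_zero]; exact hA0
    · refine le_of_mul_le_mul_right ?_ h0
      have h1 : α * ‖u‖ * ‖u‖ = α * ‖u‖^2 := by ring
      rw [h1]; exact hkey
  have hJα : 1/α ≤ 1/ᾱ + 1/(c*r^ρ) := by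
    have j1 : 0 < 1/(c*r^ρ) := one_div_pos.mpr (mul_pos hc hrρ0)
    have j2 : 0 < 1/ᾱ := one_div_pos.mpr hᾱ
    rcases min_cases ᾱ (c*r^ρ) with ⟨h1, _⟩ | ⟨h1, _⟩
    · rw [hαdef, h1]; linarith only [j1]
    · rw [hαdef, h1]; linarith only [j2]
  have hJρ0 : 0 ≤ 1/ᾱ + 1/(c*r^ρ) := by
    have j1 : 0 < 1/(c*r^ρ) := one_div_pos.mpr (mul_pos hc hrρ0)
    have j2 : 0 < 1/ᾱ := one_div_pos.mpr hᾱ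
    linarith only [j1, j2]
  have huA : ‖u‖ ≤ A * (1/ᾱ + 1/(c*r^ρ)) := by
    have h1 : ‖u‖ ≤ A / α := by
      rw [le_div_iff₀ hα0]; linarith only [hαu]
    have h2 : A / α = A * (1/α) := by ring
    calc ‖u‖ ≤ A * (1/α) := by rw [← h2]; exact h1
      _ ≤ A * (1/ᾱ + 1/(c*r^ρ)) := mul_le_mul_of_nonneg_left hJα hA0
  have f1 : r^(1+ϱ) ≤ r^q := pow_le (1+ϱ) q (by linarith only [hq1, hϱ, hρ0])
  have f5 : r^q ≤ r^ρ := pow_le q ρ hρq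
  have f4 : r^q ≤ 1 := Real.rpow_le_one hr0.le hr1 hq0'.le
  have hJgen : ∀ a : ℝ, ρ ≤ a → 0 ≤ a → r^a * (1/ᾱ + 1/(c*r^ρ)) ≤ 1/ᾱ + 1/c := by
    intro a haρ ha0
    have g1 : r^a ≤ 1 := Real.rpow_le_one hr0.le hr1 ha0
    have g2 : r^a ≤ r^ρ := pow_le a ρ haρ
    have a1 : r^a * (1/ᾱ) ≤ 1/ᾱ := by
      have h := mul_le_mul_of_nonneg_right g1 (one_div_nonneg.mpr hᾱ.le)
      rwa [one_mul] at h
    have a2 : r^a * (1/(c*r^ρ)) ≤ 1/c := by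
      have e1 : r^ρ * (1/(c*r^ρ)) = 1/c := by
        field_simp
      have e2 : r^a * (1/(c*r^ρ)) ≤ r^ρ * (1/(c*r^ρ)) :=
        mul_le_mul_of_nonneg_right g2 (one_div_nonneg.mpr (mul_pos hc hrρ0).le)
      linarith only [e1, e2]
    linarith only [a1, a2]
  have hαJ : α * (1/ᾱ + 1/(c*r^ρ)) ≤ 2 := by
    have a1 : α * (1/ᾱ) ≤ 1 := by
      rw [mul_one_div]; exact (div_le_one hᾱ).mpr hαᾱ
    have a2 : α * (1/(c*r^ρ)) ≤ 1 := by
      rw [mul_one_div]; exact (div_le_one (mul_pos hc hrρ0)).mpr hαc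
    linarith only [a1, a2]
  have h2K : (0:ℝ) ≤ 2*K₂*r^q := by
    have := mul_nonneg hK₂.le hrq0.le
    linarith only [this]
  have hsq : ‖w‖^2 ≤ 4*K₂^2*(r^q*r^q) := by
    have h := mul_le_mul hw2 hw2 (norm_nonneg w) h2K
    nlinarith only [h]
  have hdw : d*‖w‖ ≤ 2*K₂^2*(r^q*r^q) := by
    have h := mul_le_mul hdz hw2 (norm_nonneg w) (mul_nonneg hK₂.le hrq0.le)
    nlinarith only [h]
  have hA' : A ≤ (1+M+ᾱ)*r^(1+ϱ) + (4*L₀*K₂^2 + 2*C₁*K₂^2)*(r^q*r^q) + 2*K₂*(α*r^q) := by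
    have p1 : (1+M+ᾱ)*‖e‖ ≤ (1+M+ᾱ)*r^(1+ϱ) :=
      mul_le_mul_of_nonneg_left he1 (by linarith only [hM, hᾱ])
    have p2 : L₀*‖w‖^2 ≤ 4*L₀*K₂^2*(r^q*r^q) := by
      have h := mul_le_mul_of_nonneg_left hsq hL₀
      nlinarith only [h]
    have p3 : C₁*d*‖w‖ ≤ 2*C₁*K₂^2*(r^q*r^q) := by
      have h := mul_le_mul_of_nonneg_left hdw hC₁.le
      nlinarith only [h]
    have p4 : α*‖w‖ ≤ 2*K₂*(α*r^q) := by
      have h := mul_le_mul_of_nonneg_left hw2 hα0.le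
      nlinarith only [h]
    rw [hAdef]; linarith only [p1, p2, p3, p4]
  have hsplit : r^(1+ϱ) = r^q * r^(1+ϱ-q) := by
    rw [← Real.rpow_add hr0]; congr 1; ring
  have hAJ : A * (1/ᾱ + 1/(c*r^ρ)) ≤ K₃ * r^q := by
    have g1 : (1+M+ᾱ)*r^(1+ϱ) * (1/ᾱ + 1/(c*r^ρ))
        ≤ (1+M+ᾱ)*((1/ᾱ+1/c)*r^q) := by
      have s4 : r^(1+ϱ-q) * (1/ᾱ + 1/(c*r^ρ)) ≤ 1/ᾱ + 1/c :=
        hJgen _ (by linarith only [hρq, hq1, hϱ]) (by linarith only [hq1, hϱ, hρ0])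
      have s5 : r^(1+ϱ) * (1/ᾱ + 1/(c*r^ρ)) = r^q * (r^(1+ϱ-q) * (1/ᾱ + 1/(c*r^ρ))) := by
        rw [hsplit]; ring
      have s6 : r^(1+ϱ) * (1/ᾱ + 1/(c*r^ρ)) ≤ r^q * (1/ᾱ + 1/c) := by
        rw [s5]; exact mul_le_mul_of_nonneg_left s4 hrq0.le
      have s8 := mul_le_mul_of_nonneg_left s6 (by linarith only [hM, hᾱ] : (0:ℝ) ≤ 1+M+ᾱ)
      nlinarith only [s8]
    have g2 : (4*L₀*K₂^2 + 2*C₁*K₂^2)*(r^q*r^q) * (1/ᾱ + 1/(c*r^ρ))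
        ≤ (4*L₀*K₂^2 + 2*C₁*K₂^2)*((1/ᾱ+1/c)*r^q) := by
      have s4 : r^q * (1/ᾱ + 1/(c*r^ρ)) ≤ 1/ᾱ + 1/c := hJgen q hρq hq0'.le
      have s6 : (r^q*r^q) * (1/ᾱ + 1/(c*r^ρ)) ≤ r^q * (1/ᾱ + 1/c) := by
        have s5 : (r^q*r^q) * (1/ᾱ + 1/(c*r^ρ)) = r^q * (r^q * (1/ᾱ + 1/(c*r^ρ))) := by ring
        rw [s5]; exact mul_le_mul_of_nonneg_left s4 hrq0.le
      have s7 : (0:ℝ) ≤ 4*L₀*K₂^2 + 2*C₁*K₂^2 := by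
        linarith only [mul_nonneg hL₀ (sq_nonneg K₂), mul_nonneg hC₁.le (sq_nonneg K₂)]
      have s8 := mul_le_mul_of_nonneg_left s6 s7
      nlinarith only [s8]
    have g3 : 2*K₂*(α*r^q) * (1/ᾱ + 1/(c*r^ρ)) ≤ 4*K₂*r^q := by
      have s1 : (α*r^q) * (1/ᾱ + 1/(c*r^ρ)) = r^q * (α * (1/ᾱ + 1/(c*r^ρ))) := by ring
      have s2 : (α*r^q) * (1/ᾱ + 1/(c*r^ρ)) ≤ r^q * 2 := by
        rw [s1]; exact mul_le_mul_of_nonneg_left hαJ hrq0.le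
      have s8 := mul_le_mul_of_nonneg_left s2
        (by linarith only [hK₂] : (0:ℝ) ≤ 2*K₂)
      nlinarith only [s8]
    have hAmul : A * (1/ᾱ + 1/(c*r^ρ))
        ≤ ((1+M+ᾱ)*r^(1+ϱ) + (4*L₀*K₂^2 + 2*C₁*K₂^2)*(r^q*r^q) + 2*K₂*(α*r^q))
          * (1/ᾱ + 1/(c*r^ρ)) :=
      mul_le_mul_of_nonneg_right hA' hJρ0
    have hK₃r : K₃ * r^q = (1+M+ᾱ)*((1/ᾱ+1/c)*r^q)
        + (4*L₀*K₂^2 + 2*C₁*K₂^2)*((1/ᾱ+1/c)*r^q) + 4*K₂*r^q := by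
      rw [hK₃def]; ring
    nlinarith only [hAmul, g1, g2, g3, hK₃r]
  have huK : ‖u‖ ≤ K₃ * r^q := huA.trans hAJ
  have htb : ‖xhat - x‖ ≤ K₄ * r^q := by
    rw [hz]
    have n1 : ‖u + e - w‖ ≤ ‖u‖ + ‖e‖ + ‖w‖ := by
      calc ‖u + e - w‖ ≤ ‖u + e‖ + ‖w‖ := norm_sub_le _ _
        _ ≤ ‖u‖ + ‖e‖ + ‖w‖ := by linarith only [norm_add_le u e]
    have n2 : ‖e‖ ≤ r^q := he0.trans hrrq
    have n3 : K₄ * r^q = K₃*r^q + r^q + 2*K₂*r^q := by rw [hK₄def]; ring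
    linarith only [n1, n2, n3, huK, hw2]
  have hxhball : xhat ∈ Metric.ball xbar δ := by
    rw [Metric.mem_ball, dist_eq_norm]
    have n1 : ‖xhat - xbar‖ ≤ ‖xhat - x‖ + ‖x - xbar‖ := by
      calc ‖xhat - xbar‖ = ‖(xhat - x) + (x - xbar)‖ := by congr 1; abel
        _ ≤ _ := norm_add_le _ _
    have n2 : K₄ * r^q ≤ K₄ * η := mul_le_mul_of_nonneg_left hrqη hK₄.le
    have n3 : η ≤ δ/(2*K₄+2) := min_le_right _ _
    have n4 : K₄ * η ≤ δ/2 := by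
      have n5 : K₄ * η ≤ K₄ * (δ/(2*K₄+2)) := mul_le_mul_of_nonneg_left n3 hK₄.le
      have n6 : K₄ * (δ/(2*K₄+2)) ≤ δ/2 := by
        rw [mul_div_assoc', div_le_div_iff₀ (by linarith only [hK₄]) (by norm_num)]
        nlinarith only [hδ, hK₄]
      linarith only [n5, n6]
    calc ‖xhat - xbar‖ ≤ ‖xhat - x‖ + ‖x - xbar‖ := n1
      _ < K₄*r^q + ε := add_lt_add_of_le_of_lt htb hxε
      _ ≤ δ/2 + δ/3 := add_le_add (n2.trans n4) hεδ3
      _ < δ := by linarith only [hδ]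
  have hGh : ‖Gmap f' prox xhat‖ ≤ ‖e‖ + ‖P - (xhat - f' xhat)‖ := by
    have h1 : Gmap f' prox xhat = e + (prox P - prox (xhat - f' xhat)) := by
      show xhat - prox (xhat - f' xhat) = e + (prox P - prox (xhat - f' xhat))
      rw [hedef, hsdef]; abel
    rw [h1]
    have h2 := norm_add_le e (prox P - prox (xhat - f' xhat))
    have h3 : ‖prox P - prox (xhat - f' xhat)‖ ≤ ‖P - (xhat - f' xhat)‖ :=
      prox_nonexpansive hgproper hgconv hprox _ _
    linarith only [h2, h3]
  have hPd : P - (xhat - f' xhat) =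
      (f' xhat - f' x - (f'' x) (xhat - x)) - ((B - f'' x) (xhat - x))
        - α • (xhat - x) := by
    rw [hPdef]; simp only [ContinuousLinearMap.sub_apply]; abel
  have hT2 : ‖f' xhat - f' x - (f'' x) (xhat - x)‖ ≤ (L₀*‖xhat - x‖)*‖xhat - x‖ :=
    taylor_grad_bound hhess hL₀ hlip2' hxball hxhball
  have hT3 : ‖(B - f'' x) (xhat - x)‖ ≤ C₁*d*‖xhat - x‖ :=
    ((B - f'' x).le_opNorm _).trans (mul_le_mul_of_nonneg_right hBC (norm_nonneg _))
  have hT4 : ‖α • (xhat - x)‖ = α*‖xhat - x‖ := by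
    rw [norm_smul, Real.norm_eq_abs, abs_of_pos hα0]
  have hPn : ‖P - (xhat - f' xhat)‖
      ≤ L₀*‖xhat - x‖^2 + C₁*d*‖xhat - x‖ + α*‖xhat - x‖ := by
    rw [hPd]
    have n1 : ‖(f' xhat - f' x - (f'' x) (xhat - x)) - ((B - f'' x) (xhat - x))
        - α • (xhat - x)‖ ≤ ‖(f' xhat - f' x - (f'' x) (xhat - x))
          - ((B - f'' x) (xhat - x))‖ + ‖α • (xhat - x)‖ := norm_sub_le _ _
    have n2 : ‖(f' xhat - f' x - (f'' x) (xhat - x)) - ((B - f'' x) (xhat - x))‖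
        ≤ ‖f' xhat - f' x - (f'' x) (xhat - x)‖ + ‖(B - f'' x) (xhat - x)‖ :=
      norm_sub_le _ _
    nlinarith only [hT2, hT3, n1, n2, hT4]
  have hrpqmul : r^ρ * r^q = r^(ρ+q) := (Real.rpow_add hr0 ρ q).symm
  have hE1 : ‖e‖ ≤ r^(ρ+q) := he1.trans (pow_le (1+ϱ) (ρ+q) (by linarith only [hq1, hϱ]))
  have hqq : r^q*r^q ≤ r^(ρ+q) := by
    have h := mul_le_mul_of_nonneg_right f5 hrq0.le
    linarith only [h, hrpqmul]
  have ht0 : (0:ℝ) ≤ ‖xhat - x‖ := norm_nonneg _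
  have b1 : L₀*‖xhat - x‖^2 ≤ L₀*K₄^2*r^(ρ+q) := by
    have m1 : ‖xhat - x‖*‖xhat - x‖ ≤ (K₄*r^q)*(K₄*r^q) :=
      mul_le_mul htb htb ht0 (mul_nonneg hK₄.le hrq0.le)
    have m3 : K₄^2*(r^q*r^q) ≤ K₄^2*r^(ρ+q) := mul_le_mul_of_nonneg_left hqq (sq_nonneg K₄)
    have m4 : ‖xhat - x‖^2 ≤ K₄^2*r^(ρ+q) := by nlinarith only [m1, m3]
    have m5 := mul_le_mul_of_nonneg_left m4 hL₀
    nlinarith only [m5]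
  have b2 : C₁*d*‖xhat - x‖ ≤ C₁*K₂*K₄*r^(ρ+q) := by
    have m1 : d*‖xhat - x‖ ≤ (K₂*r^q)*(K₄*r^q) :=
      mul_le_mul hdz htb ht0 (mul_nonneg hK₂.le hrq0.le)
    have m3 : K₂*K₄*(r^q*r^q) ≤ K₂*K₄*r^(ρ+q) :=
      mul_le_mul_of_nonneg_left hqq (mul_nonneg hK₂.le hK₄.le)
    have m4 : d*‖xhat - x‖ ≤ K₂*K₄*r^(ρ+q) := by nlinarith only [m1, m3]
    have m5 := mul_le_mul_of_nonneg_left m4 hC₁.le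
    nlinarith only [m5]
  have b3 : α*‖xhat - x‖ ≤ c*K₄*r^(ρ+q) := by
    have m1 : α*‖xhat - x‖ ≤ (c*r^ρ)*(K₄*r^q) :=
      mul_le_mul hαc htb ht0 (mul_pos hc hrρ0).le
    have m2 : c*r^ρ*(K₄*r^q) = c*K₄*r^(ρ+q) := by rw [← hrpqmul]; ring
    linarith only [m1, m2]
  have hCexp : (1 + L₀*K₄^2 + C₁*K₂*K₄ + c*K₄)*r^(ρ+q)
      = r^(ρ+q) + L₀*K₄^2*r^(ρ+q) + C₁*K₂*K₄*r^(ρ+q) + c*K₄*r^(ρ+q) := by ring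
  linarith only [hGh, hPn, hE1, b1, b2, b3, hCexp]
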